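/- arXiv:2009.11162 — 2 statements merged into one kernel-verified Lean document; each statement's English description precedes it below -/
import Mathlib

section
/- Let E : ℝ^m → ℝ be three times continuously differentiable, let θ₀ ∈ ℝ^m, and for a step size h > 0 define the modified loss Ẽ_h(θ) = E(θ) + (h/4)‖∇E(θ)‖². Then there exist constants C > 0 and h₀ > 0 such that for every h ∈ (0, h₀] and every curve θ̃ : [0, h] → ℝ^m satisfying θ̃(0) = θ₀ and θ̃′(t) = −∇Ẽ_h(θ̃(t)) for all t ∈ [0, h], the one-step error of gradient descent satisfies ‖(θ₀ − h∇E(θ₀)) − θ̃(h)‖ ≤ C·h³. -/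
/-!
Since the Hessian of `E` is symmetric, `∇Ẽ_h = F + h Q` with `F = ∇E` and `Q = ½ DF·F`. For any
fields `F ∈ C²` and `Q ∈ C¹`, a solution of `u' = -(F u + h Q u)` on `[0, h]` stays within `O(h)`
of `x₀`, satisfies `u t = x₀ - t F x₀ + O(h t)`, and then, by the first-order Taylor expansion
of `F` at `x₀`, agrees with `x₀ - t (F x₀ + h Q x₀) + (t² / 2) DF(x₀) F(x₀)` up to `O(h² t)`.
At `t = h` the `h²` terms cancel exactly for `Q = ½ DF·F`, leaving the gradient descent step.
-/

open Set Metric Filter Topology InnerProductSpace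

section Flow

variable {V : Type*} [NormedAddCommGroup V] [NormedSpace ℝ V]

theorem Convex.norm_image_sub_sub_fderiv_le {W : Type*} [NormedAddCommGroup W] [NormedSpace ℝ W]
    {f : V → W} {f' : V → V →L[ℝ] W} {s : Set V} {x₀ x : V} {L : ℝ} (hs : Convex ℝ s)
    (hf : ∀ y ∈ s, HasFDerivWithinAt f (f' y) s y) (hL : 0 ≤ L)
    (hf' : ∀ y ∈ s, ‖f' y - f' x₀‖ ≤ L * ‖y - x₀‖) (hx₀ : x₀ ∈ s) (hx : x ∈ s) :
    ‖f x - f x₀ - f' x₀ (x - x₀)‖ ≤ L * ‖x - x₀‖ ^ 2 := by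
  have hs' : Convex ℝ (s ∩ closedBall x₀ ‖x - x₀‖) := hs.inter (convex_closedBall _ _)
  have key := hs'.norm_image_sub_le_of_norm_hasFDerivWithin_le' (C := L * ‖x - x₀‖)
    (fun y hy => (hf y hy.1).mono inter_subset_left)
    (fun y hy => (hf' y hy.1).trans (by gcongr; exact mem_closedBall_iff_norm.1 hy.2))
    ⟨hx₀, mem_closedBall_self (norm_nonneg _)⟩ ⟨hx, mem_closedBall_iff_norm.2 le_rfl⟩
  linarith

theorem norm_le_mul_of_hasDerivAt_of_norm_le {e e' : ℝ → V} {h C : ℝ} (he0 : e 0 = 0)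
    (he : ∀ t ∈ Icc 0 h, HasDerivAt e (e' t) t) (hC : ∀ t ∈ Icc 0 h, ‖e' t‖ ≤ C) :
    ∀ t ∈ Icc 0 h, ‖e t‖ ≤ C * t := by
  simpa [he0] using norm_image_sub_le_of_norm_deriv_le_segment'
    (fun t ht => (he t ht).hasDerivWithinAt) (fun t ht => hC t (Ico_subset_Icc_self ht))

theorem norm_sub_le_mul_of_hasDerivAt_of_norm_lt {u : ℝ → V} {G : V → V} {x₀ : V} {M h : ℝ}
    (hM : 0 ≤ M) (hu0 : u 0 = x₀) (hu : ∀ t ∈ Icc 0 h, HasDerivAt u (G (u t)) t)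
    (hG : ∀ x ∈ closedBall x₀ (M * h), ‖G x‖ < M) :
    ∀ t ∈ Icc 0 h, ‖u t - x₀‖ ≤ M * t := by
  refine image_norm_le_of_norm_deriv_right_lt_deriv_boundary (f := fun t => u t - x₀)
    (fun t ht => ((hu t ht).continuousAt.sub continuousAt_const).continuousWithinAt)
    (fun t ht => ((hu t (Ico_subset_Icc_self ht)).sub_const x₀).hasDerivWithinAt)
    (by simp [hu0]) (fun t => (hasDerivAt_id t).const_mul M) fun t ht hut => ?_
  simpa using hG (u t) (mem_closedBall_iff_norm.2 (hut.trans_le (by gcongr; exact ht.2.le)))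

theorem norm_sub_le_of_hasDerivAt_neg_add_smul {F Q : V → V} {u : ℝ → V} {x₀ : V} {K h : ℝ}
    (hFK : ∀ x ∈ closedBall x₀ (2 * K * h), ‖F x‖ ≤ K)
    (hQK : ∀ x ∈ closedBall x₀ (2 * K * h), ‖Q x‖ ≤ K) (hK : 0 < K) (hh : 0 ≤ h) (hh1 : h < 1)
    (hu0 : u 0 = x₀) (hu : ∀ t ∈ Icc 0 h, HasDerivAt u (-(F (u t) + h • Q (u t))) t) :
    ∀ t ∈ Icc 0 h, ‖u t - x₀‖ ≤ 2 * K * t := by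
  refine norm_sub_le_mul_of_hasDerivAt_of_norm_lt (G := fun x => -(F x + h • Q x))
    (by positivity) hu0 hu fun x hx => ?_
  calc ‖-(F x + h • Q x)‖ ≤ ‖F x‖ + h * ‖Q x‖ := by
        rw [norm_neg]; exact (norm_add_le _ _).trans (by rw [norm_smul, Real.norm_of_nonneg hh])
    _ ≤ K + h * K := by gcongr <;> [exact hFK x hx; exact hQK x hx]
    _ < 2 * K := by nlinarith

theorem norm_sub_add_smul_le_of_hasDerivAt_neg_add_smul {F Q : V → V} {u : ℝ → V} {x₀ : V}
    {K h : ℝ} (hFK : ∀ x ∈ closedBall x₀ (2 * K * h), ‖F x‖ ≤ K)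
    (hQK : ∀ x ∈ closedBall x₀ (2 * K * h), ‖Q x‖ ≤ K)
    (hFL : ∀ x ∈ closedBall x₀ (2 * K * h), ‖F x - F x₀‖ ≤ K * ‖x - x₀‖)
    (hK : 1 ≤ K) (hh : 0 ≤ h) (hh1 : h < 1)
    (hu0 : u 0 = x₀) (hu : ∀ t ∈ Icc 0 h, HasDerivAt u (-(F (u t) + h • Q (u t))) t) :
    ∀ t ∈ Icc 0 h, ‖u t - x₀ + t • F x₀‖ ≤ 3 * K ^ 2 * h * t := by
  have hdisp := norm_sub_le_of_hasDerivAt_neg_add_smul hFK hQK (by linarith) hh hh1 hu0 hu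
  refine norm_le_mul_of_hasDerivAt_of_norm_le (e := fun t => u t - x₀ + t • F x₀)
    (e' := fun t => -(F (u t) - F x₀) - h • Q (u t)) (by simp [hu0]) (fun t ht => ?_)
    fun t ht => ?_
  · exact (((hu t ht).sub_const x₀).add ((hasDerivAt_id t).smul_const (F x₀))).congr_deriv
      (by simp only [one_smul]; abel)
  · have hut : u t ∈ closedBall x₀ (2 * K * h) :=
      mem_closedBall_iff_norm.2 ((hdisp t ht).trans (by gcongr; exact ht.2))
    calc ‖-(F (u t) - F x₀) - h • Q (u t)‖ ≤ ‖F (u t) - F x₀‖ + h * ‖Q (u t)‖ := by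
          refine (norm_sub_le _ _).trans ?_
          rw [norm_neg, norm_smul, Real.norm_of_nonneg hh]
      _ ≤ K * (2 * K * t) + h * K := by
          gcongr
          · exact (hFL _ hut).trans (by gcongr; exact hdisp t ht)
          · exact hQK _ hut
      _ ≤ 3 * K ^ 2 * h := by
          nlinarith [mul_le_mul_of_nonneg_left ht.2 (sq_nonneg K),
            mul_le_mul_of_nonneg_left hK (mul_nonneg hh (by linarith : 0 ≤ K))]

theorem norm_sub_add_smul_fderiv_le {F Q : V → V} {F' : V → V →L[ℝ] V} {x₀ x : V}
    {ρ K h t : ℝ} (hF : ∀ y ∈ closedBall x₀ ρ, HasFDerivAt F (F' y) y)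
    (hF'L : ∀ y ∈ closedBall x₀ ρ, ‖F' y - F' x₀‖ ≤ K * ‖y - x₀‖) (hF'K : ‖F' x₀‖ ≤ K)
    (hQL : ∀ y ∈ closedBall x₀ ρ, ‖Q y - Q x₀‖ ≤ K * ‖y - x₀‖) (hK : 0 ≤ K) (hh : 0 ≤ h)
    (hx : x ∈ closedBall x₀ ρ) :
    ‖(F x - F x₀ + t • F' x₀ (F x₀)) + h • (Q x - Q x₀)‖
      ≤ K * ‖x - x₀‖ ^ 2 + K * ‖x - x₀ + t • F x₀‖ + h * (K * ‖x - x₀‖) := by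
  have hx₀ : x₀ ∈ closedBall x₀ ρ := mem_closedBall_self (dist_nonneg.trans hx)
  have hsplit : F x - F x₀ + t • F' x₀ (F x₀)
      = (F x - F x₀ - F' x₀ (x - x₀)) + F' x₀ (x - x₀ + t • F x₀) := by
    simp only [map_add, map_sub, map_smul]; abel
  rw [hsplit]
  refine norm_add₃_le.trans ?_
  rw [norm_smul, Real.norm_of_nonneg hh]
  gcongr
  · exact Convex.norm_image_sub_sub_fderiv_le (convex_closedBall _ _)
      (fun y hy => (hF y hy).hasFDerivWithinAt) hK hF'L hx₀ hx
  · exact ((F' x₀).le_opNorm _).trans (by gcongr)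
  · exact hQL x hx

theorem norm_euler_sub_le_of_hasDerivAt_neg_add_smul {F Q : V → V} {F' : V → V →L[ℝ] V}
    {u : ℝ → V} {x₀ : V} {K h : ℝ}
    (hF : ∀ x ∈ closedBall x₀ (2 * K * h), HasFDerivAt F (F' x) x)
    (hF'L : ∀ x ∈ closedBall x₀ (2 * K * h), ‖F' x - F' x₀‖ ≤ K * ‖x - x₀‖) (hF'K : ‖F' x₀‖ ≤ K)
    (hFK : ∀ x ∈ closedBall x₀ (2 * K * h), ‖F x‖ ≤ K)
    (hFL : ∀ x ∈ closedBall x₀ (2 * K * h), ‖F x - F x₀‖ ≤ K * ‖x - x₀‖)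
    (hQK : ∀ x ∈ closedBall x₀ (2 * K * h), ‖Q x‖ ≤ K)
    (hQL : ∀ x ∈ closedBall x₀ (2 * K * h), ‖Q x - Q x₀‖ ≤ K * ‖x - x₀‖)
    (hK : 1 ≤ K) (hh : 0 ≤ h) (hh1 : h < 1)
    (hu0 : u 0 = x₀) (hu : ∀ t ∈ Icc 0 h, HasDerivAt u (-(F (u t) + h • Q (u t))) t) :
    ‖x₀ - h • F x₀ - h ^ 2 • (Q x₀ - (1 / 2 : ℝ) • F' x₀ (F x₀)) - u h‖ ≤ 9 * K ^ 3 * h ^ 3 := by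
  have hdisp := norm_sub_le_of_hasDerivAt_neg_add_smul hFK hQK (by linarith) hh hh1 hu0 hu
  have hfirst := norm_sub_add_smul_le_of_hasDerivAt_neg_add_smul hFK hQK hFL hK hh hh1 hu0 hu
  set A := F' x₀ (F x₀)
  have hsecond : ∀ t ∈ Icc 0 h,
      ‖u t - (x₀ - t • (F x₀ + h • Q x₀) + (t ^ 2 / 2) • A)‖ ≤ 9 * K ^ 3 * h ^ 2 * t := by
    refine norm_le_mul_of_hasDerivAt_of_norm_le
      (e' := fun t => -((F (u t) - F x₀ + t • A) + h • (Q (u t) - Q x₀)))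
      (by simp [hu0]) (fun t ht => ?_) fun t ht => ?_
    · have hp := (((hasDerivAt_id t).smul_const (F x₀ + h • Q x₀)).const_sub x₀).add
        (((hasDerivAt_pow 2 t).div_const 2).smul_const A)
      refine ((hu t ht).sub hp).congr_deriv ?_
      norm_num
      module
    · have hut : u t ∈ closedBall x₀ (2 * K * h) :=
        mem_closedBall_iff_norm.2 ((hdisp t ht).trans (by gcongr; exact ht.2))
      calc ‖-((F (u t) - F x₀ + t • A) + h • (Q (u t) - Q x₀))‖
          ≤ K * ‖u t - x₀‖ ^ 2 + K * ‖u t - x₀ + t • F x₀‖ + h * (K * ‖u t - x₀‖) := by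
            rw [norm_neg]
            exact norm_sub_add_smul_fderiv_le hF hF'L hF'K hQL (by linarith) hh hut
        _ ≤ K * (2 * K * t) ^ 2 + K * (3 * K ^ 2 * h * t) + h * (K * (2 * K * t)) := by
            gcongr
            · exact hdisp t ht
            · exact hfirst t ht
            · exact hdisp t ht
        _ ≤ 9 * K ^ 3 * h ^ 2 := by
            have hK0 : 0 ≤ K := by linarith
            have htt : t * t ≤ h * h := mul_le_mul ht.2 ht.2 ht.1 hh
            have hth : h * t ≤ h * h := mul_le_mul_of_nonneg_left ht.2 hh
            have hKK : K ^ 2 ≤ K ^ 3 := by nlinarith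
            nlinarith [mul_le_mul_of_nonneg_left htt (pow_nonneg hK0 3),
              mul_le_mul_of_nonneg_left hth (pow_nonneg hK0 3),
              mul_le_mul hKK hth (mul_nonneg hh ht.1) (pow_nonneg hK0 3)]
  have hend : x₀ - h • F x₀ - h ^ 2 • (Q x₀ - (1 / 2 : ℝ) • A) - u h
      = -(u h - (x₀ - h • (F x₀ + h • Q x₀) + (h ^ 2 / 2) • A)) := by module
  rw [hend, norm_neg]
  exact (hsecond h ⟨hh, le_rfl⟩).trans_eq (by ring)

theorem exists_norm_euler_sub_le_of_contDiffAt {F Q : V → V} {x₀ : V}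
    (hF : ContDiffAt ℝ 2 F x₀) (hQ : ContDiffAt ℝ 1 Q x₀) :
    ∃ C > (0 : ℝ), ∃ h₀ > (0 : ℝ), ∀ h : ℝ, 0 < h → h ≤ h₀ → ∀ u : ℝ → V, u 0 = x₀ →
      (∀ t ∈ Icc 0 h, HasDerivAt u (-(F (u t) + h • Q (u t))) t) →
        ‖x₀ - h • F x₀ - h ^ 2 • (Q x₀ - (1 / 2 : ℝ) • fderiv ℝ F x₀ (F x₀)) - u h‖
          ≤ C * h ^ 3 := by
  obtain ⟨LF', sF', hsF', hF'lip⟩ := (hF.fderiv_right (m := 1) (by norm_num)).exists_lipschitzOnWith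
  obtain ⟨LF, sF, hsF, hFlip⟩ := (hF.of_le one_le_two).exists_lipschitzOnWith
  obtain ⟨LQ, sQ, hsQ, hQlip⟩ := hQ.exists_lipschitzOnWith
  have hdiff : {x | DifferentiableAt ℝ F x} ∈ 𝓝 x₀ :=
    (hF.eventually (by simp)).mono fun x hx => hx.differentiableAt (by norm_num)
  obtain ⟨r, hr, hsub⟩ :=
    nhds_basis_closedBall.mem_iff.1 (inter_mem (inter_mem hsF' hsF) (inter_mem hsQ hdiff))
  obtain ⟨K, hKdef⟩ : ∃ K : ℝ,
    K = 1 + ‖F x₀‖ + ‖Q x₀‖ + ‖fderiv ℝ F x₀‖ + LF * r + LQ * r + LF' + LF + LQ := ⟨_, rfl⟩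
  have hLF := LF.coe_nonneg; have hLF' := LF'.coe_nonneg; have hLQ := LQ.coe_nonneg
  have hK : 1 ≤ K ∧ ‖F x₀‖ + LF * r ≤ K ∧ ‖Q x₀‖ + LQ * r ≤ K ∧ ‖fderiv ℝ F x₀‖ ≤ K ∧
      LF' ≤ K ∧ LF ≤ K ∧ LQ ≤ K := by
    have := mul_nonneg hLF hr.le; have := mul_nonneg hLQ hr.le
    have := norm_nonneg (F x₀); have := norm_nonneg (Q x₀); have := norm_nonneg (fderiv ℝ F x₀)
    refine ⟨?_, ?_, ?_, ?_, ?_, ?_, ?_⟩ <;> linarith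
  have hK0 : 0 < K := by linarith [hK.1]
  refine ⟨9 * K ^ 3, by positivity, min (r / (2 * K)) (1 / 2), by positivity,
    fun h hh hh₀ u hu0 hu => ?_⟩
  have hKh : 2 * K * h ≤ r := (le_div_iff₀' (by positivity)).1 (hh₀.trans (min_le_left _ _))
  have hsub' : ∀ x ∈ closedBall x₀ (2 * K * h), ‖x - x₀‖ ≤ r ∧
      x ∈ (sF' ∩ sF) ∩ (sQ ∩ {x | DifferentiableAt ℝ F x}) := fun x hx =>
    ⟨(mem_closedBall_iff_norm.1 hx).trans hKh, hsub (closedBall_subset_closedBall hKh hx)⟩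
  have hx₀ := hsub (mem_closedBall_self hr.le)
  refine norm_euler_sub_le_of_hasDerivAt_neg_add_smul (fun x hx => (hsub' x hx).2.2.2.hasFDerivAt)
    (fun x hx => ?_) hK.2.2.2.1 (fun x hx => ?_) (fun x hx => ?_) (fun x hx => ?_)
    (fun x hx => ?_) hK.1 hh.le (by linarith [min_le_right (r / (2 * K)) (1 / 2)]) hu0 hu
  all_goals obtain ⟨hxr, ⟨hxF', hxF⟩, hxQ, -⟩ := hsub' x hx
  · exact (hF'lip.norm_sub_le hxF' hx₀.1.1).trans (by gcongr; exact hK.2.2.2.2.1)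
  · have := mul_le_mul_of_nonneg_left hxr hLF
    linarith [norm_le_norm_add_norm_sub' (F x) (F x₀), hFlip.norm_sub_le hxF hx₀.1.2, hK.2.1]
  · exact (hFlip.norm_sub_le hxF hx₀.1.2).trans (by gcongr; exact hK.2.2.2.2.2.1)
  · have := mul_le_mul_of_nonneg_left hxr hLQ
    linarith [norm_le_norm_add_norm_sub' (Q x) (Q x₀), hQlip.norm_sub_le hxQ hx₀.2.1, hK.2.2.1]
  · exact (hQlip.norm_sub_le hxQ hx₀.2.1).trans (by gcongr; exact hK.2.2.2.2.2.2)

end Flow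

section Gradient

variable {V : Type*} [NormedAddCommGroup V] [InnerProductSpace ℝ V] [CompleteSpace V]
  {E : V → ℝ} {x : V}

theorem contDiffAt_gradient {m n : WithTop ℕ∞} (hE : ContDiffAt ℝ n E x) (hmn : m + 1 ≤ n) :
    ContDiffAt ℝ m (gradient E) x :=
  (toDual ℝ V).symm.contDiff.contDiffAt.comp x (hE.fderiv_right hmn)

theorem inner_fderiv_gradient_apply (v w : V) :
    inner ℝ (fderiv ℝ (gradient E) x v) w = fderiv ℝ (fderiv ℝ E) x v w := by
  change inner ℝ (fderiv ℝ ((toDual ℝ V).symm ∘ fderiv ℝ E) x v) w = _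
  rw [LinearIsometryEquiv.comp_fderiv]
  exact toDual_symm_apply

theorem inner_fderiv_gradient_comm (hE : ContDiffAt ℝ 2 E x) (v w : V) :
    inner ℝ (fderiv ℝ (gradient E) x v) w = inner ℝ v (fderiv ℝ (gradient E) x w) := by
  rw [← real_inner_comm v, inner_fderiv_gradient_apply, inner_fderiv_gradient_apply]
  exact (hE.isSymmSndFDerivAt (by simp)).eq v w

theorem hasGradientAt_add_mul_norm_sq_gradient (hE : ContDiffAt ℝ 2 E x) (c : ℝ) :
    HasGradientAt (fun y => E y + c * ‖gradient E y‖ ^ 2)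
      (gradient E x + (2 * c) • fderiv ℝ (gradient E) x (gradient E x)) x := by
  have hg : DifferentiableAt ℝ (gradient E) x :=
    (contDiffAt_gradient hE le_rfl).differentiableAt one_ne_zero
  rw [hasGradientAt_iff_hasFDerivAt]
  refine ((hE.differentiableAt (by norm_num)).hasFDerivAt.add
    (hg.hasFDerivAt.norm_sq.const_mul c)).congr_fderiv ?_
  ext v
  simp only [add_apply, smul_apply, ContinuousLinearMap.comp_apply, coe_innerSL_apply,
    inner_gradient_left, nsmul_eq_mul, Nat.cast_ofNat, smul_eq_mul, map_add, toDual_gradient,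
    map_smul, toDual_apply_apply, inner_fderiv_gradient_comm hE]
  ring

end Gradient

/-- For a C³ loss `E : ℝ^m → ℝ` and initial point `θ₀`, there are `C > 0`
and `h₀ > 0` such that for every step size `h ∈ (0, h₀]` and every solution `θt` of the
gradient flow of the modified loss `Ẽ_h(θ) = E(θ) + (h/4)‖∇E(θ)‖²` starting at `θ₀`,
the one-step error of gradient descent satisfies
`‖(θ₀ − h∇E(θ₀)) − θt(h)‖ ≤ C h³`. -/
theorem one_step_error_modified_flow (m : ℕ) (E : EuclideanSpace ℝ (Fin m) → ℝ)
    (hE : ContDiff ℝ 3 E) (θ₀ : EuclideanSpace ℝ (Fin m)) :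
    ∃ C > (0 : ℝ), ∃ h₀ > (0 : ℝ), ∀ h : ℝ, 0 < h → h ≤ h₀ →
      ∀ θt : ℝ → EuclideanSpace ℝ (Fin m), θt 0 = θ₀ →
        (∀ t ∈ Set.Icc (0 : ℝ) h,
          HasDerivAt θt
            (-(gradient (fun θ => E θ + (h / 4) * ‖gradient E θ‖ ^ 2) (θt t))) t) →
        ‖(θ₀ - h • gradient E θ₀) - θt h‖ ≤ C * h ^ 3 := by
  set Q := fun x => (1 / 2 : ℝ) • fderiv ℝ (gradient E) x (gradient E x)
  have hgrad := contDiffAt_gradient (x := θ₀) hE.contDiffAt (m := 2) (by norm_num)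
  obtain ⟨C, hC, h₀, hh₀, hstep⟩ := exists_norm_euler_sub_le_of_contDiffAt (Q := Q) hgrad
    (((hgrad.fderiv_right le_rfl).clm_apply (hgrad.of_le (by norm_num))).const_smul _)
  refine ⟨C, hC, h₀, hh₀, fun h hh hh₀ θt hθ0 hθ => ?_⟩
  have hmodified : ∀ x, gradient (fun θ => E θ + (h / 4) * ‖gradient E θ‖ ^ 2) x
      = gradient E x + h • Q x := fun x => by
    rw [(hasGradientAt_add_mul_norm_sq_gradient (hE.contDiffAt.of_le (by norm_num)) _).gradient]
    module
  simpa [Q] using hstep h hh hh₀ θt hθ0 fun t ht => hmodified (θt t) ▸ hθ t ht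
end

section
/- Let ε₁,…,εₙ : ℝ^m → ℝ be differentiable scalar error functions, collect them into ε(θ) = (ε₁(θ),…,εₙ(θ)) ∈ ℝⁿ, define E(θ) = Σᵢ εᵢ(θ)², the kernel matrix K(θ) ∈ ℝ^{n×n} with entries K(θ)ᵢⱼ = ⟨∇εᵢ(θ), ∇εⱼ(θ)⟩, and the modified loss Ẽ(θ) = E(θ) + (h/4)‖∇E(θ)‖². Then Ẽ(θ) = ε(θ)ᵀ (I_n + h·K(θ)) ε(θ) for all θ ∈ ℝ^m. -/
/-!
The gradient of `E = ∑ᵢ εᵢ²` is `2 ∑ᵢ εᵢ ∇εᵢ`, and the squared norm of a linear combination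
`∑ᵢ cᵢ vᵢ` is the quadratic form `cᵀ G c` of the Gram matrix `G` of the `vᵢ`. The NTK matrix is
the Gram matrix of the gradients `∇εᵢ`, so `(h/4)‖∇E‖² = h εᵀ K ε`, while `E = εᵀ ε`.
-/

open RealInnerProductSpace Matrix

section GradientCalculus

variable {F : Type*} [NormedAddCommGroup F] [InnerProductSpace ℝ F] [CompleteSpace F] {x : F}

theorem HasGradientAt.fun_sum {ι : Type*} {s : Finset ι} {f : ι → F → ℝ} {f' : ι → F}
    (hf : ∀ i ∈ s, HasGradientAt (f i) (f' i) x) :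
    HasGradientAt (fun y => ∑ i ∈ s, f i y) (∑ i ∈ s, f' i) x := by
  rw [hasGradientAt_iff_hasFDerivAt, map_sum]
  exact HasFDerivAt.fun_sum fun i hi => (hf i hi).hasFDerivAt

theorem HasGradientAt.sq {f : F → ℝ} {f' : F} (hf : HasGradientAt f f' x) :
    HasGradientAt (fun y => f y ^ 2) ((2 * f x) • f') x := by
  rw [hasGradientAt_iff_hasFDerivAt, map_smul]
  simpa using hf.hasFDerivAt.pow 2

end GradientCalculus

theorem norm_sum_smul_sq_eq_dotProduct_gram_mulVec {ι E : Type*} [Fintype ι]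
    [NormedAddCommGroup E] [InnerProductSpace ℝ E] (c : ι → ℝ) (v : ι → E) :
    ‖∑ i, c i • v i‖ ^ 2 = c ⬝ᵥ gram ℝ v *ᵥ c := by
  simpa [real_inner_self_eq_norm_sq] using (star_dotProduct_gram_mulVec v c c).symm

theorem Matrix.dotProduct_one_add_smul_mulVec {ι R : Type*} [Fintype ι] [DecidableEq ι]
    [CommSemiring R] (A : Matrix ι ι R) (t : R) (x : ι → R) :
    x ⬝ᵥ (1 + t • A) *ᵥ x = x ⬝ᵥ x + t * (x ⬝ᵥ A *ᵥ x) := by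
  rw [add_mulVec, one_mulVec, smul_mulVec, dotProduct_add, dotProduct_smul, smul_eq_mul]

/-- For differentiable scalar error functions `εᵢ : ℝ^m → ℝ`, the
least-squares loss `E(θ) = Σᵢ εᵢ(θ)²` and the NTK matrix `K(θ)ᵢⱼ = ⟨∇εᵢ(θ), ∇εⱼ(θ)⟩`,
the modified loss satisfies `Ẽ(θ) = E(θ) + (h/4)‖∇E(θ)‖² = ε(θ)ᵀ (Iₙ + h K(θ)) ε(θ)`. -/
theorem modified_loss_eq_ntk_quadratic_form (m n : ℕ)
    (ε : Fin n → EuclideanSpace ℝ (Fin m) → ℝ) (hε : ∀ i, Differentiable ℝ (ε i))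
    (h : ℝ) (θ : EuclideanSpace ℝ (Fin m)) :
    (∑ i, (ε i θ) ^ 2) + (h / 4) * ‖gradient (fun x => ∑ i, (ε i x) ^ 2) θ‖ ^ 2
      = dotProduct (fun i => ε i θ)
          (((1 : Matrix (Fin n) (Fin n) ℝ) +
              h • Matrix.of fun i j => ⟪gradient (ε i) θ, gradient (ε j) θ⟫).mulVec
            (fun i => ε i θ)) := by
  have hE : HasGradientAt (fun x => ∑ i, ε i x ^ 2)
      (∑ i, (2 * ε i θ) • gradient (ε i) θ) θ :=
    HasGradientAt.fun_sum fun i _ => (hε i θ).hasGradientAt.sq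
  have hE_eq : ∑ i, (2 * ε i θ) • gradient (ε i) θ
      = (2 : ℝ) • ∑ i, ε i θ • gradient (ε i) θ := by
    simp only [Finset.smul_sum, mul_smul]
  rw [dotProduct_one_add_smul_mulVec, hE.gradient, hE_eq, norm_smul, mul_pow,
    norm_sum_smul_sq_eq_dotProduct_gram_mulVec]
  simp only [dotProduct, gram, Real.norm_ofNat, sq]
  ring
end
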